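/- The state ρ = ½(|s₁⟩⟨s₁| + |s₂⟩⟨s₂|) with |s₁⟩ = (|00⟩_{AC}+|11⟩_{AC})⊗|00⟩_{BD}/√2 and |s₂⟩ = (|00⟩_{AC}−|11⟩_{AC})⊗|11⟩_{BD}/√2 satisfies ⟨X_A X_C⟩ = 0, ⟨Y_A Y_C Z_D⟩ = −1, and ⟨Z_A Z_C⟩ = 1, so that ⟨X_A X_C⟩² + ⟨Y_A Y_C Z_D⟩² + ⟨Z_A Z_C⟩² = 2 > 1; moreover the reduced state ρ_AC = ½(|00⟩⟨00| + |11⟩⟨11|) is separable. -/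

import Mathlib

open Matrix
open scoped Kronecker ComplexOrder

noncomputable def PauliX : Matrix (Fin 2) (Fin 2) ℂ := !![0, 1; 1, 0]
noncomputable def PauliY : Matrix (Fin 2) (Fin 2) ℂ := !![0, -Complex.I; Complex.I, 0]
noncomputable def PauliZ : Matrix (Fin 2) (Fin 2) ℂ := !![1, 0; 0, -1]
noncomputable abbrev Id2 : Matrix (Fin 2) (Fin 2) ℂ := 1

/-- Four-qubit index type, ordered as `A × B × C × D`. -/
abbrev Q4 := Fin 2 × Fin 2 × Fin 2 × Fin 2

/-- `|s₁⟩ = (|00⟩_{AC}+|11⟩_{AC})/√2 ⊗ |00⟩_{BD}`. -/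
noncomputable def s1 : Q4 → ℂ := fun x =>
  if x.1 = x.2.2.1 ∧ x.2.1 = 0 ∧ x.2.2.2 = 0 then ((1 / Real.sqrt 2 : ℝ) : ℂ) else 0

/-- `|s₂⟩ = (|00⟩_{AC}−|11⟩_{AC})/√2 ⊗ |11⟩_{BD}`. -/
noncomputable def s2 : Q4 → ℂ := fun x =>
  if x.1 = x.2.2.1 ∧ x.2.1 = 1 ∧ x.2.2.2 = 1 then
    (if x.1 = 0 then (1 : ℂ) else -1) * ((1 / Real.sqrt 2 : ℝ) : ℂ) else 0

/-- `ρ = ½(|s₁⟩⟨s₁| + |s₂⟩⟨s₂|)`. -/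
noncomputable def ρlink : Matrix Q4 Q4 ℂ :=
  (1 / 2 : ℂ) • (vecMulVec s1 (star s1) + vecMulVec s2 (star s2))

/-- Expectation value `Tr(ρ O)` (real part). -/
noncomputable def linkExp (O : Matrix Q4 Q4 ℂ) : ℝ := ((ρlink * O).trace).re

/-- Reduced state of `ρ` on `AC`. -/
noncomputable def ρAC : Matrix (Fin 2 × Fin 2) (Fin 2 × Fin 2) ℂ :=
  fun x y => ∑ b : Fin 2, ∑ d : Fin 2, ρlink (x.1, b, x.2, d) (y.1, b, y.2, d)

/-!
Both `s₁` and `s₂` have the form `φ_{AC} ⊗ u_B ⊗ v_D`: a Bell state `Φ±` on `AC` times a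
computational basis state on `B` and on `D`. Hence the expectation of `P_A Q_B S_C T_D` in them
factorises as `⟨Φ±|P ⊗ S|Φ±⟩ · Q_bb · T_bb`. In `Φ±` the correlators `XX`, `YY`, `ZZ` equal `±1`,
`∓1`, `1`, and `Z_D` reads `+1` on `s₁` and `-1` on `s₂`, so averaging gives `0`, `-1`, `1`.
Tracing out `BD` keeps only the diagonal of the Bell states, so
`ρ_AC = ½ (|0⟩⟨0| ⊗ |0⟩⟨0| + |1⟩⟨1| ⊗ |1⟩⟨1|)`.
-/

section InterleavedTensor

variable {α β γ δ α' β' γ' δ' R : Type*}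

def interleavedTensor [Mul R] (φ : α × γ → R) (u : β → R) (v : δ → R) : α × β × γ × δ → R :=
  fun x => φ (x.1, x.2.2.1) * u x.2.1 * v x.2.2.2

theorem star_interleavedTensor [CommSemiring R] [StarRing R] (φ : α × γ → R) (u : β → R)
    (v : δ → R) :
    star (interleavedTensor φ u v) = interleavedTensor (star φ) (star u) (star v) := by
  ext x
  simp only [interleavedTensor, Pi.star_apply, star_mul']

variable [Fintype α] [Fintype β] [Fintype γ] [Fintype δ]

theorem sum_interleave [CommSemiring R] (f : α × γ → R) (g : β → R) (h : δ → R) :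
    ∑ x : α × β × γ × δ, f (x.1, x.2.2.1) * g x.2.1 * h x.2.2.2 =
      (∑ p, f p) * (∑ b, g b) * (∑ d, h d) := by
  let e : α × β × γ × δ ≃ (α × γ) × β × δ :=
    { toFun := fun x => ((x.1, x.2.2.1), x.2.1, x.2.2.2)
      invFun := fun y => (y.1.1, y.2.1, y.1.2, y.2.2)
      left_inv := fun _ => rfl
      right_inv := fun _ => rfl }
  refine (Fintype.sum_equiv e _ (fun y => f y.1 * g y.2.1 * h y.2.2) fun _ => rfl).trans ?_
  rw [mul_assoc, Finset.sum_mul_sum, Finset.sum_mul_sum]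
  simp only [Fintype.sum_prod_type, Finset.mul_sum, mul_assoc]

theorem interleavedTensor_dotProduct [CommSemiring R] (φ φ' : α × γ → R) (u u' : β → R)
    (v v' : δ → R) :
    interleavedTensor φ u v ⬝ᵥ interleavedTensor φ' u' v' = (φ ⬝ᵥ φ') * (u ⬝ᵥ u') * (v ⬝ᵥ v') := by
  simp only [dotProduct, interleavedTensor, ← sum_interleave]
  exact Fintype.sum_congr _ _ fun _ => by ring

theorem kronecker_mulVec_interleavedTensor [CommSemiring R] (P : Matrix α' α R)
    (Q : Matrix β' β R) (S : Matrix γ' γ R) (T : Matrix δ' δ R) (φ : α × γ → R) (u : β → R)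
    (v : δ → R) :
    (P ⊗ₖ (Q ⊗ₖ (S ⊗ₖ T))) *ᵥ interleavedTensor φ u v =
      interleavedTensor ((P ⊗ₖ S) *ᵥ φ) (Q *ᵥ u) (T *ᵥ v) := by
  ext x
  simp only [mulVec, dotProduct, interleavedTensor, kroneckerMap_apply, ← sum_interleave]
  exact Fintype.sum_congr _ _ fun _ => by ring

theorem expectation_kronecker_interleavedTensor [CommSemiring R] [StarRing R]
    (P : Matrix α α R) (Q : Matrix β β R) (S : Matrix γ γ R) (T : Matrix δ δ R)
    (φ : α × γ → R) (u : β → R) (v : δ → R) :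
    star (interleavedTensor φ u v) ⬝ᵥ ((P ⊗ₖ (Q ⊗ₖ (S ⊗ₖ T))) *ᵥ interleavedTensor φ u v) =
      (star φ ⬝ᵥ ((P ⊗ₖ S) *ᵥ φ)) * (star u ⬝ᵥ (Q *ᵥ u)) * (star v ⬝ᵥ (T *ᵥ v)) := by
  rw [star_interleavedTensor, kronecker_mulVec_interleavedTensor, interleavedTensor_dotProduct]

end InterleavedTensor

theorem trace_vecMulVec_mul {m n R : Type*} [Fintype m] [Fintype n] [CommSemiring R]
    (u : m → R) (v : n → R) (O : Matrix n m R) : (vecMulVec u v * O).trace = v ⬝ᵥ (O *ᵥ u) := by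
  rw [vecMulVec_mul, trace_vecMulVec, dotProduct_comm, dotProduct_mulVec]

theorem star_single_dotProduct_mulVec_single {n R : Type*} [Fintype n] [DecidableEq n]
    [CommSemiring R] [StarRing R] (M : Matrix n n R) (i : n) :
    star (Pi.single i 1 : n → R) ⬝ᵥ (M *ᵥ Pi.single i 1) = M i i := by
  rw [Pi.star_single, star_one, mulVec_single_one, single_one_dotProduct, col_apply]

theorem sum_kronecker_diagonal_single {n R : Type*} [Fintype n] [DecidableEq n] [Semiring R] :
    ∑ k : n, diagonal (Pi.single k (1 : R)) ⊗ₖ diagonal (Pi.single k 1) =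
      diagonal fun x => if x.1 = x.2 then 1 else 0 := by
  ext x y
  simp [diagonal_kronecker_diagonal, diagonal_apply, Matrix.sum_apply, Pi.single_apply]

open scoped ComplexConjugate

/-- `(|00⟩ + σ|11⟩)/√2`; `σ = 1` and `σ = -1` give `Φ⁺` and `Φ⁻`. -/
noncomputable def bellVec (σ : ℂ) : Fin 2 × Fin 2 → ℂ := fun x =>
  if x.1 = x.2 then (if x.1 = 0 then 1 else σ) * ((1 / Real.sqrt 2 : ℝ) : ℂ) else 0

theorem s1_eq : s1 = interleavedTensor (bellVec 1) (Pi.single 0 1) (Pi.single 0 1) := by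
  ext ⟨a, b, c, d⟩
  fin_cases a <;> fin_cases b <;> fin_cases c <;> fin_cases d <;>
    simp [s1, interleavedTensor, bellVec]

theorem s2_eq : s2 = interleavedTensor (bellVec (-1)) (Pi.single 1 1) (Pi.single 1 1) := by
  ext ⟨a, b, c, d⟩
  fin_cases a <;> fin_cases b <;> fin_cases c <;> fin_cases d <;>
    simp [s2, interleavedTensor, bellVec]

theorem inv_ofReal_sqrt_two_mul_self :
    ((Real.sqrt 2 : ℝ) : ℂ)⁻¹ * ((Real.sqrt 2 : ℝ) : ℂ)⁻¹ = 1 / 2 := by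
  rw [← mul_inv, ← Complex.ofReal_mul, Real.mul_self_sqrt zero_le_two]
  norm_num

theorem bellVec_expectation_kronecker (σ : ℂ) (M N : Matrix (Fin 2) (Fin 2) ℂ) :
    star (bellVec σ) ⬝ᵥ ((M ⊗ₖ N) *ᵥ bellVec σ) =
      (M 0 0 * N 0 0 + σ * (M 0 1 * N 0 1) + conj σ * (M 1 0 * N 1 0) +
        conj σ * σ * (M 1 1 * N 1 1)) / 2 := by
  simp only [dotProduct, Pi.star_apply, bellVec, Fin.isValue, one_div, Complex.ofReal_inv, ite_mul,
    one_mul, RCLike.star_def, mulVec, kroneckerMap_apply, mul_ite, mul_zero, Fintype.sum_prod_type,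
    Finset.sum_ite_eq, Finset.mem_univ, ↓reduceIte, Fin.sum_univ_two, one_ne_zero, map_inv₀,
    Complex.conj_ofReal, zero_ne_one, map_zero, zero_mul, add_zero, map_mul, zero_add]
  linear_combination (M 0 0 * N 0 0 + σ * (M 0 1 * N 0 1) + conj σ * (M 1 0 * N 1 0) +
        conj σ * σ * (M 1 1 * N 1 1)) * inv_ofReal_sqrt_two_mul_self

theorem linkExp_kronecker (P Q S T : Matrix (Fin 2) (Fin 2) ℂ) :
    linkExp (P ⊗ₖ (Q ⊗ₖ (S ⊗ₖ T))) =
      (star (bellVec 1) ⬝ᵥ ((P ⊗ₖ S) *ᵥ bellVec 1) * Q 0 0 * T 0 0 +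
        star (bellVec (-1)) ⬝ᵥ ((P ⊗ₖ S) *ᵥ bellVec (-1)) * Q 1 1 * T 1 1).re / 2 := by
  rw [linkExp, ρlink, smul_mul, add_mul, trace_smul, trace_add, trace_vecMulVec_mul,
    trace_vecMulVec_mul, s1_eq, s2_eq, expectation_kronecker_interleavedTensor,
    expectation_kronecker_interleavedTensor]
  simp only [star_single_dotProduct_mulVec_single]
  rw [smul_eq_mul, one_div_mul_eq_div, Complex.div_ofNat_re]

theorem ρAC_eq : ρAC = fun x y => if x = y ∧ x.1 = x.2 then (1 / 2 : ℂ) else 0 := by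
  ext ⟨a, c⟩ ⟨a', c'⟩
  fin_cases a <;> fin_cases c <;> fin_cases a' <;> fin_cases c' <;>
    norm_num [ρAC, ρlink, s1_eq, s2_eq, interleavedTensor, bellVec, Fin.sum_univ_two,
      vecMulVec_apply, inv_ofReal_sqrt_two_mul_self]

/-- The state `ρ = ½(|s₁⟩⟨s₁| + |s₂⟩⟨s₂|)` satisfies `⟨X_A X_C⟩ = 0`,
`⟨Y_A Y_C Z_D⟩ = −1`, `⟨Z_A Z_C⟩ = 1`, hence
`⟨X_A X_C⟩² + ⟨Y_A Y_C Z_D⟩² + ⟨Z_A Z_C⟩² = 2 > 1`, although the reduced state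
`ρ_AC = ½(|00⟩⟨00| + |11⟩⟨11|)` is separable. -/
theorem link_certification_example :
    linkExp (PauliX ⊗ₖ (Id2 ⊗ₖ (PauliX ⊗ₖ Id2))) = 0 ∧
    linkExp (PauliY ⊗ₖ (Id2 ⊗ₖ (PauliY ⊗ₖ PauliZ))) = -1 ∧
    linkExp (PauliZ ⊗ₖ (Id2 ⊗ₖ (PauliZ ⊗ₖ Id2))) = 1 ∧
    linkExp (PauliX ⊗ₖ (Id2 ⊗ₖ (PauliX ⊗ₖ Id2))) ^ 2 +
      linkExp (PauliY ⊗ₖ (Id2 ⊗ₖ (PauliY ⊗ₖ PauliZ))) ^ 2 +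
      linkExp (PauliZ ⊗ₖ (Id2 ⊗ₖ (PauliZ ⊗ₖ Id2))) ^ 2 = 2 ∧
    (2 : ℝ) > 1 ∧
    ρAC = (fun x y => if x = y ∧ x.1 = x.2 then (1 / 2 : ℂ) else 0) ∧
    ∃ (K : ℕ) (w : Fin K → ℝ)
      (α γ : Fin K → Matrix (Fin 2) (Fin 2) ℂ),
      (∀ k, 0 ≤ w k) ∧ ∑ k, w k = 1 ∧
      (∀ k, (α k).PosSemidef ∧ (α k).trace = 1) ∧
      (∀ k, (γ k).PosSemidef ∧ (γ k).trace = 1) ∧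
      ρAC = ∑ k, (w k : ℂ) • (α k ⊗ₖ γ k) := by
  have hX : linkExp (PauliX ⊗ₖ (Id2 ⊗ₖ (PauliX ⊗ₖ Id2))) = 0 := by
    rw [linkExp_kronecker, bellVec_expectation_kronecker, bellVec_expectation_kronecker]
    norm_num [PauliX]
  have hY : linkExp (PauliY ⊗ₖ (Id2 ⊗ₖ (PauliY ⊗ₖ PauliZ))) = -1 := by
    rw [linkExp_kronecker, bellVec_expectation_kronecker, bellVec_expectation_kronecker]
    norm_num [PauliY, PauliZ]
  have hZ : linkExp (PauliZ ⊗ₖ (Id2 ⊗ₖ (PauliZ ⊗ₖ Id2))) = 1 := by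
    rw [linkExp_kronecker, bellVec_expectation_kronecker, bellVec_expectation_kronecker]
    norm_num [PauliZ]
  have hsep : ρAC = ∑ k : Fin 2,
      ((1 / 2 : ℝ) : ℂ) • (diagonal (Pi.single k 1) ⊗ₖ diagonal (Pi.single k 1)) := by
    rw [← Finset.smul_sum, sum_kronecker_diagonal_single, ρAC_eq]
    ext x y
    by_cases hxy : x = y <;> simp [hxy]
  have hpure (k : Fin 2) : (diagonal (Pi.single k (1 : ℂ))).PosSemidef ∧
      (diagonal (Pi.single k (1 : ℂ))).trace = 1 :=
    ⟨.diagonal (Pi.single_nonneg.2 zero_le_one), by simp⟩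
  refine ⟨hX, hY, hZ, by rw [hX, hY, hZ]; norm_num, by norm_num, ρAC_eq, 2, fun _ => 1 / 2,
    fun k => diagonal (Pi.single k 1), fun k => diagonal (Pi.single k 1), fun _ => by norm_num,
    by norm_num, hpure, hpure, hsep⟩
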